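/- Let G be a finite simple graph. The number of integers t with 1 ≤ t ≤ χ_DP(G) − 1 that satisfy α_t^{DP}(G) ≥ t·|V(G)|/χ_DP(G) is at least ⌈(χ_DP(G) − 1)/2⌉, i.e., the inequality holds for at least half of the values of t in {1, …, χ_DP(G) − 1}. -/

import Mathlib

open SimpleGraph

/-- `DPCover G H L` means `(L, H)` is a cover of the graph `G`:
(1) the sets `L u` partition `V(H)`; (2) each `H[L u]` is complete;
(3) for each edge `uv` of `G`, the edges of `H` between `L u` and `L v` form a matching;
(4) there are no edges of `H` between lists of distinct non-adjacent vertices. -/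
structure DPCover {V : Type} (G : SimpleGraph V) {W : Type} (H : SimpleGraph W)
    (L : V → Finset W) : Prop where
  partition : ∀ w : W, ∃! v : V, w ∈ L v
  cliques : ∀ v : V, ∀ a ∈ L v, ∀ b ∈ L v, a ≠ b → H.Adj a b
  matching : ∀ ⦃u v : V⦄, G.Adj u v → ∀ a ∈ L u, ∀ b ∈ L v, ∀ b' ∈ L v,
      H.Adj a b → H.Adj a b' → b = b'
  nonadj : ∀ ⦃u v : V⦄, u ≠ v → ¬ G.Adj u v → ∀ a ∈ L u, ∀ b ∈ L v, ¬ H.Adj a b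

/-- A finset is independent in `H` if no two of its elements are adjacent. -/
def IsIndepFinset {W : Type} (H : SimpleGraph W) (S : Finset W) : Prop :=
  ∀ a ∈ S, ∀ b ∈ S, ¬ H.Adj a b

/-- The independence number of `H`. -/
noncomputable def indepNum {W : Type} [Fintype W] (H : SimpleGraph W) : ℕ :=
  sSup {n : ℕ | ∃ S : Finset W, IsIndepFinset H S ∧ S.card = n}

/-- The DP-chromatic number of `G`: the least `m` such that every `m`-fold cover `(L, H)`
of `G` admits an `H`-coloring, i.e. an independent set in `H` of size `|V(G)|`. -/
noncomputable def chiDP {V : Type} [Fintype V] (G : SimpleGraph V) : ℕ :=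
  sInf {m : ℕ | ∀ (W : Type) (_ : Fintype W) (H : SimpleGraph W) (L : V → Finset W),
    DPCover G H L → (∀ v, (L v).card = m) →
    ∃ S : Finset W, IsIndepFinset H S ∧ S.card = Fintype.card V}

/-- The partial DP `t`-chromatic number of `G`: the minimum of the independence number
`α(H)` over all `t`-fold covers `(L, H)` of `G`. -/
noncomputable def alphaDP {V : Type} [Fintype V] (G : SimpleGraph V) (t : ℕ) : ℕ :=
  sInf {n : ℕ | ∃ (W : Type) (_ : Fintype W) (H : SimpleGraph W) (L : V → Finset W),
    DPCover G H L ∧ (∀ v, (L v).card = t) ∧ _root_.indepNum H = n}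

/-- A graph `G` is partially DP-nice if `α_t^{DP}(G) ≥ t|V(G)|/χ_DP(G)` for all
`t ∈ {1, …, χ_DP(G)}`. -/
def PartiallyDPNice {V : Type} [Fintype V] (G : SimpleGraph V) : Prop :=
  ∀ t : ℕ, 1 ≤ t → t ≤ chiDP G →
    (t * Fintype.card V : ℚ) / (chiDP G : ℚ) ≤ (alphaDP G t : ℚ)

/-!
If `t + s = χ_DP(G)`, gluing a `t`-fold cover and an `s`-fold cover of `G` by joining the two
lists over each vertex gives a `χ_DP(G)`-fold cover. An `H`-coloring of it splits into
independent sets of the two pieces, so `α_t^{DP}(G) + α_s^{DP}(G) ≥ |V(G)|`. Hence whenever the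
inequality fails at `t` it holds at `χ_DP(G) - t`, and pairing `t` with `χ_DP(G) - t` counts at
least half of `{1, …, χ_DP(G) - 1}`.
-/

lemma card_le_indepNum {W : Type} [Fintype W] {H : SimpleGraph W} {S : Finset W}
    (h : IsIndepFinset H S) : S.card ≤ _root_.indepNum H :=
  le_csSup ⟨Fintype.card W, by rintro n ⟨T, -, rfl⟩; exact T.card_le_univ⟩ ⟨S, h, rfl⟩

namespace DPCover

variable {V : Type} {G : SimpleGraph V} {W : Type} {H : SimpleGraph W} {L : V → Finset W}

lemma eq_of_mem (hC : DPCover G H L) {a : W} {u v : V} (hu : a ∈ L u) (hv : a ∈ L v) :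
    u = v :=
  (hC.partition a).unique hu hv

end DPCover

def cliqueCoverGraph (V : Type) (t : ℕ) : SimpleGraph (V × Fin t) :=
  SimpleGraph.fromRel fun a b => a.1 = b.1

def cliqueCoverList (V : Type) (t : ℕ) (v : V) : Finset (V × Fin t) :=
  {v} ×ˢ Finset.univ

lemma mem_cliqueCoverList {V : Type} {t : ℕ} {v : V} {a : V × Fin t} :
    a ∈ cliqueCoverList V t v ↔ a.1 = v := by
  simp only [cliqueCoverList, Finset.mem_product, Finset.mem_singleton, Finset.mem_univ, and_true]

lemma dpCover_cliqueCover {V : Type} (G : SimpleGraph V) (t : ℕ) :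
    DPCover G (cliqueCoverGraph V t) (cliqueCoverList V t) where
  partition w := ⟨w.1, mem_cliqueCoverList.2 rfl, fun v hv => (mem_cliqueCoverList.1 hv).symm⟩
  cliques v a ha b hb hab := by
    simp_all [cliqueCoverGraph, mem_cliqueCoverList]
  matching u v huv a ha b hb b' hb' hab _ := by
    simp only [cliqueCoverGraph, fromRel_adj, mem_cliqueCoverList] at *
    grind [huv.ne]
  nonadj u v huv _ a ha b hb hab := by
    simp only [cliqueCoverGraph, fromRel_adj, mem_cliqueCoverList] at *
    grind

lemma exists_dpCover {V : Type} [Fintype V] (G : SimpleGraph V) (t : ℕ) :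
    ∃ (W : Type) (_ : Fintype W) (H : SimpleGraph W) (L : V → Finset W),
      DPCover G H L ∧ ∀ v, (L v).card = t :=
  ⟨V × Fin t, inferInstance, _, _, dpCover_cliqueCover G t, fun v => by simp [cliqueCoverList]⟩

section SumCover

variable {V W₁ W₂ : Type} {G : SimpleGraph V} {H₁ : SimpleGraph W₁} {H₂ : SimpleGraph W₂}
  {L₁ : V → Finset W₁} {L₂ : V → Finset W₂}

variable (H₁ H₂ L₁ L₂) in
def sumCoverGraph : SimpleGraph (W₁ ⊕ W₂) where
  Adj
    | .inl a, .inl b => H₁.Adj a b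
    | .inr a, .inr b => H₂.Adj a b
    | .inl a, .inr b => ∃ v, a ∈ L₁ v ∧ b ∈ L₂ v
    | .inr a, .inl b => ∃ v, b ∈ L₁ v ∧ a ∈ L₂ v
  symm := by
    constructor
    rintro (a | a) (b | b) h
    exacts [h.symm, h, h, h.symm]
  loopless := by
    constructor
    rintro (a | a) h
    exacts [H₁.loopless.irrefl a h, H₂.loopless.irrefl a h]

variable (L₁ L₂) in
def sumCoverList (v : V) : Finset (W₁ ⊕ W₂) := (L₁ v).disjSum (L₂ v)

lemma DPCover.sum (hC₁ : DPCover G H₁ L₁) (hC₂ : DPCover G H₂ L₂) :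
    DPCover G (sumCoverGraph H₁ H₂ L₁ L₂) (sumCoverList L₁ L₂) := by
  have cross {a b u v} (ha : a ∈ L₁ u) (hb : b ∈ L₂ v)
      (hab : (sumCoverGraph H₁ H₂ L₁ L₂).Adj (.inl a) (.inr b)) : u = v := by
    obtain ⟨x, hax, hbx⟩ := hab
    exact (hC₁.eq_of_mem ha hax).trans (hC₂.eq_of_mem hbx hb)
  constructor
  · rintro (a | a)
    · simpa [sumCoverList] using hC₁.partition a
    · simpa [sumCoverList] using hC₂.partition a
  · rintro v (a | a) ha (b | b) hb hab <;> simp only [sumCoverList, Finset.inl_mem_disjSum,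
      Finset.inr_mem_disjSum] at ha hb
    · exact hC₁.cliques v a ha b hb (by simpa using hab)
    · exact ⟨v, ha, hb⟩
    · exact ⟨v, hb, ha⟩
    · exact hC₂.cliques v a ha b hb (by simpa using hab)
  · rintro u v huv (a | a) ha (b | b) hb (b' | b') hb' hab hab' <;> simp only [sumCoverList,
      Finset.inl_mem_disjSum, Finset.inr_mem_disjSum] at ha hb hb'
    · exact congrArg _ (hC₁.matching huv a ha b hb b' hb' hab hab')
    · exact absurd (cross ha hb' hab') huv.ne
    · exact absurd (cross ha hb hab) huv.ne
    · exact absurd (cross ha hb hab) huv.ne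
    · exact absurd (cross hb ha hab) huv.ne'
    · exact absurd (cross hb ha hab) huv.ne'
    · exact absurd (cross hb' ha hab') huv.ne'
    · exact congrArg _ (hC₂.matching huv a ha b hb b' hb' hab hab')
  · rintro u v huv hnadj (a | a) ha (b | b) hb hab <;> simp only [sumCoverList,
      Finset.inl_mem_disjSum, Finset.inr_mem_disjSum] at ha hb
    · exact hC₁.nonadj huv hnadj a ha b hb hab
    · exact huv (cross ha hb hab)
    · exact huv (cross hb ha hab).symm
    · exact hC₂.nonadj huv hnadj a ha b hb hab

lemma card_sumCoverList (v : V) :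
    (sumCoverList L₁ L₂ v).card = (L₁ v).card + (L₂ v).card :=
  Finset.card_disjSum _ _

lemma IsIndepFinset.toLeft {S : Finset (W₁ ⊕ W₂)}
    (h : IsIndepFinset (sumCoverGraph H₁ H₂ L₁ L₂) S) : IsIndepFinset H₁ S.toLeft :=
  fun _ ha _ hb => h _ (Finset.mem_toLeft.1 ha) _ (Finset.mem_toLeft.1 hb)

lemma IsIndepFinset.toRight {S : Finset (W₁ ⊕ W₂)}
    (h : IsIndepFinset (sumCoverGraph H₁ H₂ L₁ L₂) S) : IsIndepFinset H₂ S.toRight :=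
  fun _ ha _ hb => h _ (Finset.mem_toRight.1 ha) _ (Finset.mem_toRight.1 hb)

end SumCover

def DPColorable {V : Type} [Fintype V] (G : SimpleGraph V) (m : ℕ) : Prop :=
  ∀ (W : Type) (_ : Fintype W) (H : SimpleGraph W) (L : V → Finset W),
    DPCover G H L → (∀ v, (L v).card = m) →
    ∃ S : Finset W, IsIndepFinset H S ∧ S.card = Fintype.card V

section DPNumbers

variable {V : Type} [Fintype V] (G : SimpleGraph V)

lemma dpColorable_chiDP (h : 0 < chiDP G) : DPColorable G (chiDP G) :=
  Nat.sInf_mem (Nat.nonempty_of_pos_sInf h)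

lemma exists_dpCover_indepNum_eq_alphaDP (t : ℕ) :
    ∃ (W : Type) (_ : Fintype W) (H : SimpleGraph W) (L : V → Finset W),
      DPCover G H L ∧ (∀ v, (L v).card = t) ∧ _root_.indepNum H = alphaDP G t := by
  obtain ⟨W, _, H, L, hC, hL⟩ := exists_dpCover G t
  exact Nat.sInf_mem (s := {n | ∃ (W : Type) (_ : Fintype W) (H : SimpleGraph W)
    (L : V → Finset W), DPCover G H L ∧ (∀ v, (L v).card = t) ∧ _root_.indepNum H = n})
    ⟨_root_.indepNum H, W, inferInstance, H, L, hC, hL, rfl⟩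

lemma card_le_alphaDP_add_alphaDP {t s : ℕ} (h : DPColorable G (t + s)) :
    Fintype.card V ≤ alphaDP G t + alphaDP G s := by
  obtain ⟨W₁, _, H₁, L₁, hC₁, hL₁, hα₁⟩ := exists_dpCover_indepNum_eq_alphaDP G t
  obtain ⟨W₂, _, H₂, L₂, hC₂, hL₂, hα₂⟩ := exists_dpCover_indepNum_eq_alphaDP G s
  obtain ⟨S, hS, hScard⟩ := h _ inferInstance _ _ (hC₁.sum hC₂)
    fun v => by rw [card_sumCoverList, hL₁, hL₂]
  calc Fintype.card V = S.toLeft.card + S.toRight.card :=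
        hScard ▸ Finset.card_toLeft_add_card_toRight.symm
    _ ≤ _root_.indepNum H₁ + _root_.indepNum H₂ :=
        Nat.add_le_add (card_le_indepNum hS.toLeft) (card_le_indepNum hS.toRight)
    _ = alphaDP G t + alphaDP G s := by rw [hα₁, hα₂]

lemma le_alphaDP_chiDP_sub_of_alphaDP_lt {t : ℕ} (hχ : 0 < chiDP G) (ht : t ≤ chiDP G)
    (hlt : (alphaDP G t : ℚ) < t * Fintype.card V / chiDP G) :
    ((chiDP G - t : ℕ) * Fintype.card V : ℚ) / chiDP G ≤ alphaDP G (chiDP G - t) := by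
  have hsum : (Fintype.card V : ℚ) ≤ alphaDP G t + alphaDP G (chiDP G - t) := by
    have hcol := dpColorable_chiDP G hχ
    rw [← Nat.add_sub_cancel' ht] at hcol
    exact_mod_cast card_le_alphaDP_add_alphaDP G hcol
  have hχ' : (0 : ℚ) < chiDP G := by exact_mod_cast hχ
  rw [Nat.cast_sub ht, sub_mul, sub_div, mul_div_cancel_left₀ _ hχ'.ne']
  linarith

end DPNumbers

lemma le_two_mul_card_filter_Icc_add_one (m : ℕ) (P : ℕ → Prop) [DecidablePred P]
    (h : ∀ t ∈ Finset.Icc 1 (m - 1), ¬ P t → P (m - t)) :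
    m ≤ 2 * ((Finset.Icc 1 (m - 1)).filter P).card + 1 := by
  set I := Finset.Icc 1 (m - 1)
  have hpair : (I.filter fun t => ¬ P t).card ≤ (I.filter P).card := by
    refine Finset.card_le_card_of_injOn (m - ·) (fun t ht => ?_) (fun a ha b hb hab => ?_)
    · obtain ⟨htI, hPt⟩ := Finset.mem_filter.1 ht
      obtain ⟨h₁, h₂⟩ := Finset.mem_Icc.1 htI
      show m - t ∈ _
      exact Finset.mem_filter.2 ⟨Finset.mem_Icc.2 ⟨by omega, by omega⟩, h t htI hPt⟩
    · obtain ⟨ha₁, ha₂⟩ := Finset.mem_Icc.1 (Finset.mem_filter.1 ha).1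
      obtain ⟨hb₁, hb₂⟩ := Finset.mem_Icc.1 (Finset.mem_filter.1 hb).1
      simp only at hab
      omega
  have hsplit := Finset.card_filter_add_card_filter_not (s := I) P
  rw [Nat.card_Icc] at hsplit
  omega

/-- The inequality `α_t^{DP}(G) ≥ t|V(G)|/χ_DP(G)` holds for at least half of the
values of `t` in `{1, …, χ_DP(G) − 1}`: the number of such `t` is at least
`⌈(χ_DP(G) − 1)/2⌉`. -/
theorem alphaDP_half_the_values {V : Type} [Fintype V] (G : SimpleGraph V) :
    ⌈((chiDP G : ℚ) - 1) / 2⌉ ≤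
      ({t : ℕ | 1 ≤ t ∧ t ≤ chiDP G - 1 ∧
        (t * Fintype.card V : ℚ) / (chiDP G : ℚ) ≤ (alphaDP G t : ℚ)}.ncard : ℤ) := by
  classical
  set χ := chiDP G
  set P : ℕ → Prop := fun t => (t * Fintype.card V : ℚ) / χ ≤ alphaDP G t
  rcases Nat.eq_zero_or_pos χ with hχ | hχ
  · exact (Int.ceil_le.2 (by rw [hχ]; norm_num)).trans (Nat.cast_nonneg _)
  set good := (Finset.Icc 1 (χ - 1)).filter P
  have hset : {t : ℕ | 1 ≤ t ∧ t ≤ χ - 1 ∧ P t} = ↑good := by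
    ext t
    simp [good, and_assoc]
  have hhalf : (χ : ℚ) ≤ 2 * good.card + 1 := by
    exact_mod_cast le_two_mul_card_filter_Icc_add_one χ P fun t ht hPt =>
      le_alphaDP_chiDP_sub_of_alphaDP_lt G hχ ((Finset.mem_Icc.1 ht).2.trans (Nat.sub_le χ 1))
        (not_le.1 hPt)
  rw [hset, Set.ncard_coe_finset, Int.ceil_le]
  push_cast
  linarith
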